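/- arXiv:1303.6981 — 5 statements merged into one kernel-verified Lean document; each statement's English description precedes it below -/
import Mathlib

section
/- Let 𝒞 be a field of subsets of Ω and P : 𝒞 → [0,1] a price assignment. If P is coherent in betting system 2, then P is countably additive: for every sequence (A_i)_{i≥2} of pairwise disjoint sets in 𝒞 whose union A_1 = ∪_{i≥2} A_i lies in 𝒞, one has P(A_1) = Σ_{i=2}^∞ P(A_i). -/
open Filter MeasureTheory ENNReal

variable {Ω : Type*}

noncomputable def ind (A : Set Ω) (ω : Ω) : ℝ := A.indicator (fun _ => (1:ℝ)) ω

def SeriesTendsTo (f : ℕ → ℝ) (x : ℝ) : Prop :=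
  Tendsto (fun n => ∑ i ∈ Finset.range n, f i) atTop (nhds x)

def SeriesConv (f : ℕ → ℝ) : Prop := ∃ x, SeriesTendsTo f x

noncomputable def bterm (P : Set Ω → ℝ) (α : ℕ → ℝ) (A : ℕ → Set Ω) (ω : Ω) (i : ℕ) : ℝ :=
  α i * (ind (A i) ω - P (A i))

def IsSetField (C : Set (Set Ω)) : Prop :=
  Set.univ ∈ C ∧ (∀ A ∈ C, Aᶜ ∈ C) ∧ ∀ A ∈ C, ∀ B ∈ C, A ∪ B ∈ C

def System1 (C : Set (Set Ω)) (α : ℕ → ℝ) (A : ℕ → Set Ω) : Prop :=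
  (∀ i, A i ∈ C) ∧ {i | α i ≠ 0}.Finite

def System2 (C : Set (Set Ω)) (P : Set Ω → ℝ) (α : ℕ → ℝ) (A : ℕ → Set Ω) : Prop :=
  (∀ i, A i ∈ C) ∧ Summable (fun i => |α i| * P (A i)) ∧
    ∀ ω, SeriesConv (bterm P α A ω)

def System2A (C : Set (Set Ω)) (P : Set Ω → ℝ) (α : ℕ → ℝ) (A : ℕ → Set Ω) : Prop :=
  (∀ i, A i ∈ C) ∧ ∀ ω, Summable (fun i => |bterm P α A ω i|)

def System2B (C : Set (Set Ω)) (P : Set Ω → ℝ) (α : ℕ → ℝ) (A : ℕ → Set Ω) : Prop :=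
  (∀ i, A i ∈ C) ∧ ∃ M : ℝ, ∀ ω, ∀ n, ∑ i ∈ Finset.range n, |bterm P α A ω i| ≤ M

def System3 (C : Set (Set Ω)) (P : Set Ω → ℝ) (α : ℕ → ℝ) (A : ℕ → Set Ω) : Prop :=
  (∀ i, A i ∈ C) ∧ SeriesConv (fun i => α i * P (A i)) ∧
    ∀ ω, SeriesConv (bterm P α A ω)

def IncoherentIn (P : Set Ω → ℝ) (S : (ℕ → ℝ) → (ℕ → Set Ω) → Prop) : Prop :=
  ∃ α A, S α A ∧ ∃ ε > (0:ℝ), ∀ ω, ∃ L, SeriesTendsTo (bterm P α A ω) L ∧ L ≤ -ε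

def CoherentIn (P : Set Ω → ℝ) (S : (ℕ → ℝ) → (ℕ → Set Ω) → Prop) : Prop :=
  ¬ IncoherentIn P S

def IsNullSet (C : Set (Set Ω)) (P : Set Ω → ℝ) (Z : Set Ω) : Prop :=
  ∀ δ : ℝ, 0 < δ → ∃ Zd ∈ C, Z ⊆ Zd ∧ P Zd < δ

def WeaklyIncoherentIn (C : Set (Set Ω)) (P : Set Ω → ℝ)
    (S : (ℕ → ℝ) → (ℕ → Set Ω) → Prop) : Prop :=
  ∃ α A, S α A ∧ ∃ ε > (0:ℝ), ∃ Z : Set Ω, IsNullSet C P Z ∧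
    ∀ ω ∉ Z, ∃ L, SeriesTendsTo (bterm P α A ω) L ∧ L ≤ -ε

def StronglyCoherentIn (C : Set (Set Ω)) (P : Set Ω → ℝ)
    (S : (ℕ → ℝ) → (ℕ → Set Ω) → Prop) : Prop :=
  ¬ WeaklyIncoherentIn C P S

def IrrationalIn (P : Set Ω → ℝ) (S : (ℕ → ℝ) → (ℕ → Set Ω) → Prop) : Prop :=
  ∃ α A, S α A ∧ ∀ ω, ∃ L, SeriesTendsTo (bterm P α A ω) L ∧ L < 0

def RationalIn (P : Set Ω → ℝ) (S : (ℕ → ℝ) → (ℕ → Set Ω) → Prop) : Prop :=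
  ¬ IrrationalIn P S

def IsCAProb (C : Set (Set Ω)) (P : Set Ω → ℝ) : Prop :=
  P Set.univ = 1 ∧ (∀ A ∈ C, 0 ≤ P A) ∧
  (∀ A ∈ C, ∀ B ∈ C, Disjoint A B → P (A ∪ B) = P A + P B) ∧
  (∀ A : ℕ → Set Ω, (∀ i, A i ∈ C) → Pairwise (Function.onFun Disjoint A) →
    (⋃ i, A i) ∈ C → HasSum (fun i => P (A i)) (P (⋃ i, A i)))

def IsPAtom (C : Set (Set Ω)) (P : Set Ω → ℝ) (F : Set Ω) : Prop :=
  F ∈ C ∧ 0 < P F ∧ ∀ B ∈ C, B ⊆ F → P B = P F ∨ P B = 0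

def FiniteAtomicPartition (C : Set (Set Ω)) (P : Set Ω → ℝ) : Prop :=
  ∃ (n : ℕ) (F : Fin n → Set Ω), (∀ j, IsPAtom C P (F j)) ∧
    Pairwise (Function.onFun Disjoint F) ∧ (⋃ j, F j) = Set.univ

def IsPFinite (C : Set (Set Ω)) (P : Set Ω → ℝ) : Prop :=
  ∀ B : ℕ → Set Ω, (∀ i, B i ∈ C) → (∀ i, B (i+1) ⊆ B i) →
    Tendsto (fun i => P (B i)) atTop (nhds 0) → ∃ j, P (B j) = 0



/-!
A coherent price gives balance `0` to every admissible portfolio whose balance converges to the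
same constant in every state: otherwise that portfolio or its negative is a sure loss. Selling
`⋃ i, A i` and buying every `A i` is such a portfolio once `∑ P (A i)` converges, with balance
`P (⋃ i, A i) - ∑ P (A i)`. Applied to the finite truncations `A 0, …, A (n-1), ∅, ∅, …` it gives
`∑_{i<n} P (A i) = P (⋃_{i<n} A i) ≤ 1`, which yields the convergence.
-/

open Set Function

theorem IsSetField.isSetAlgebra {C : Set (Set Ω)} (hC : IsSetField C) : IsSetAlgebra C where
  empty_mem := by simpa using hC.2.1 _ hC.1
  compl_mem := fun s hs => hC.2.1 s hs
  union_mem := fun s t hs ht => hC.2.2 s hs t ht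

theorem SeriesTendsTo.neg {f : ℕ → ℝ} {x : ℝ} (h : SeriesTendsTo f x) :
    SeriesTendsTo (-f) (-x) := by
  simpa [SeriesTendsTo, Finset.sum_neg_distrib] using Tendsto.neg h

theorem hasSum_ind_iUnion {A : ℕ → Set Ω} (hdisj : Pairwise (Disjoint on A)) (ω : Ω) :
    HasSum (fun i => ind (A i) ω) (ind (⋃ i, A i) ω) := by
  by_cases hω : ω ∈ ⋃ i, A i
  · obtain ⟨j, hj⟩ := mem_iUnion.mp hω
    rw [ind, indicator_of_mem hω]
    convert hasSum_single (f := fun i => ind (A i) ω) j fun i hij =>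
      indicator_of_notMem (disjoint_right.mp (hdisj hij) hj) _
    simp [ind, indicator_of_mem hj]
  · have hω' : ∀ i, ω ∉ A i := fun i hi => hω (mem_iUnion_of_mem i hi)
    simp [ind, hω', hasSum_zero]

section Portfolio

variable {C : Set (Set Ω)} {P : Set Ω → ℝ} {α : ℕ → ℝ} {A : ℕ → Set Ω}

theorem bterm_neg (ω : Ω) : bterm P (-α) A ω = -bterm P α A ω := by
  funext i
  simp [bterm, neg_mul]

theorem System2.neg (h : System2 C P α A) : System2 C P (-α) A := by
  refine ⟨h.1, by simpa using h.2.1, fun ω => ?_⟩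
  obtain ⟨x, hx⟩ := h.2.2 ω
  exact ⟨-x, bterm_neg (P := P) ω ▸ hx.neg⟩

theorem CoherentIn.balance_eq_zero (hcoh : CoherentIn P (System2 C P))
    (hS : System2 C P α A) {L : ℝ} (hL : ∀ ω, SeriesTendsTo (bterm P α A ω) L) : L = 0 := by
  rcases lt_trichotomy L 0 with hneg | hzero | hpos
  · exact (hcoh ⟨α, A, hS, -L, by linarith, fun ω => ⟨L, hL ω, by linarith⟩⟩).elim
  · exact hzero
  · refine (hcoh ⟨-α, A, hS.neg, L, hpos, fun ω => ⟨-L, ?_, le_rfl⟩⟩).elim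
    rw [bterm_neg]
    exact (hL ω).neg

theorem CoherentIn.apply_empty_eq_zero (hcoh : CoherentIn P (System2 C P)) (hempty : ∅ ∈ C) :
    P ∅ = 0 := by
  set β : ℕ → ℝ := fun i => if i = 0 then 1 else 0
  have hbal : ∀ ω, HasSum (bterm P β (fun _ => ∅) ω) (-P ∅) := fun ω => by
    convert hasSum_ite_eq 0 (-P ∅) using 1
    funext i
    by_cases hi : i = 0 <;> simp [bterm, ind, β, hi]
  have hS : System2 C P β (fun _ => ∅) := by
    refine ⟨fun _ => hempty, ?_, fun ω => ⟨_, (hbal ω).tendsto_sum_nat⟩⟩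
    convert (hasSum_ite_eq 0 (P ∅)).summable using 1
    funext i
    by_cases hi : i = 0 <;> simp [β, hi]
  exact neg_eq_zero.mp (hcoh.balance_eq_zero hS fun ω => (hbal ω).tendsto_sum_nat)

theorem CoherentIn.apply_iUnion_eq_of_hasSum (hcoh : CoherentIn P (System2 C P))
    (hA : ∀ i, A i ∈ C) (hdisj : Pairwise (Disjoint on A)) (hun : (⋃ i, A i) ∈ C) {s : ℝ}
    (hs : HasSum (fun i => P (A i)) s) : P (⋃ i, A i) = s := by
  set B : ℕ → Set Ω := fun i => if i = 0 then ⋃ j, A j else A (i - 1)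
  set β : ℕ → ℝ := fun i => if i = 0 then -1 else 1
  have hbal : ∀ ω, HasSum (bterm P β B ω) (P (⋃ i, A i) - s) := fun ω => by
    rw [← hasSum_nat_add_iff' 1, Finset.sum_range_one]
    convert (hasSum_ind_iUnion hdisj ω).sub hs using 1
    · funext i
      simp [bterm, B, β]
    · simp only [bterm, B, β, if_pos rfl]
      ring
  have hS : System2 C P β B := by
    refine ⟨fun i => ?_, ?_, fun ω => ⟨_, (hbal ω).tendsto_sum_nat⟩⟩
    · by_cases hi : i = 0 <;> simp [B, hi, hun, hA]
    · rw [← summable_nat_add_iff 1]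
      simpa [B, β] using hs.summable
  exact sub_eq_zero.mp (hcoh.balance_eq_zero hS fun ω => (hbal ω).tendsto_sum_nat)

theorem CoherentIn.apply_biUnion_range_eq_sum (hcoh : CoherentIn P (System2 C P))
    (hC : IsSetAlgebra C) (hA : ∀ i, A i ∈ C) (hdisj : Pairwise (Disjoint on A)) (n : ℕ) :
    P (⋃ i ∈ Finset.range n, A i) = ∑ i ∈ Finset.range n, P (A i) := by
  set B : ℕ → Set Ω := fun i => if i < n then A i else ∅
  have hB : ⋃ i, B i = ⋃ i ∈ Finset.range n, A i := by
    ext ω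
    simp [B]
  have hBdisj : Pairwise (Disjoint on B) := by
    intro i j hij
    simp only [B, onFun]
    split_ifs <;> simp [hdisj hij]
  have hs : HasSum (fun i => P (B i)) (∑ i ∈ Finset.range n, P (A i)) := by
    have hempty := hcoh.apply_empty_eq_zero hC.empty_mem
    have hB0 : ∀ i ∉ Finset.range n, P (B i) = 0 := fun i hi => by
      simp [B, Finset.mem_range.not.mp hi, hempty]
    have hBA : ∑ i ∈ Finset.range n, P (B i) = ∑ i ∈ Finset.range n, P (A i) :=
      Finset.sum_congr rfl fun i hi => by simp [B, Finset.mem_range.mp hi]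
    exact hBA ▸ hasSum_sum_of_ne_finset_zero hB0
  rw [← hB]
  refine hcoh.apply_iUnion_eq_of_hasSum (fun i => ?_) hBdisj
    (hB ▸ hC.biUnion_mem _ fun i _ => hA i) hs
  by_cases hi : i < n <;> simp [B, hi, hA, hC.empty_mem]

end Portfolio

theorem stmt1 (C : Set (Set Ω)) (P : Set Ω → ℝ) (hC : IsSetField C)
    (hrange : ∀ A ∈ C, P A ∈ Set.Icc (0:ℝ) 1)
    (hcoh : CoherentIn P (System2 C P))
    (A : ℕ → Set Ω) (hA : ∀ i, A i ∈ C)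
    (hdisj : Pairwise (Function.onFun Disjoint A))
    (hun : (⋃ i, A i) ∈ C) :
    HasSum (fun i => P (A i)) (P (⋃ i, A i)) := by
  have hsum : Summable fun i => P (A i) := by
    refine summable_of_sum_range_le (c := 1) (fun i => (hrange _ (hA i)).1) fun n => ?_
    rw [← hcoh.apply_biUnion_range_eq_sum hC.isSetAlgebra hA hdisj n]
    exact (hrange _ (hC.isSetAlgebra.biUnion_mem _ fun i _ => hA i)).2
  rw [hcoh.apply_iUnion_eq_of_hasSum hA hdisj hun hsum.hasSum]
  exact hsum.hasSum
end

section
/- Let 𝒞 be a field on Ω, P a countably additive probability on 𝒞, and P* its unique countably additive extension to σ(𝒞). For every betting portfolio (α_i, A_i)_{i≥1} with A_i ∈ 𝒞, Σ_{i=1}^∞ |α_i| P(A_i) < ∞, and pointwise convergence of Σ α_i(I_{A_i} − P(A_i)) on Ω, the expectation of the balance under P* is 0. Consequently there exists ω ∈ Ω with balance ≥ 0, so P is coherent in betting system 2. -/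
open Filter MeasureTheory ENNReal

variable {Ω : Type*}

/-!
Each bet `α i * (ind (A i) - P (A i))` has mean zero under `μ` and `L¹`-norm at most
`2 * |α i| * P (A i)`, so the series of bets is absolutely summable in `L¹`. Its pointwise sum,
the balance, is then integrable and its integral is the sum of the integrals, namely `0`.
A function with zero mean under a probability measure is nonnegative somewhere, so no
portfolio loses at least `ε > 0` at every `ω`.
-/

section SeriesOfIntegrable

variable {X E : Type*} [MeasurableSpace X] {μ : Measure X}
  [NormedAddCommGroup E] {F : ℕ → X → E} {b : X → E}

theorem tsum_lintegral_enorm_ne_top_of_summable_integral_norm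
    (hF : ∀ i, Integrable (F i) μ) (hs : Summable fun i => ∫ x, ‖F i x‖ ∂μ) :
    ∑' i, ∫⁻ x, ‖F i x‖ₑ ∂μ ≠ ∞ := by
  simp_rw [← ofReal_integral_norm_eq_lintegral_enorm (hF _)]
  rw [← ENNReal.ofReal_tsum_of_nonneg (fun i => integral_nonneg fun x => norm_nonneg _) hs]
  exact ENNReal.ofReal_ne_top

variable [CompleteSpace E]

theorem ae_hasSum_of_tendsto_sum_range (hF : ∀ i, Integrable (F i) μ)
    (hs : Summable fun i => ∫ x, ‖F i x‖ ∂μ)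
    (hb : ∀ᵐ x ∂μ, Tendsto (fun n => ∑ i ∈ Finset.range n, F i x) atTop (nhds (b x))) :
    ∀ᵐ x ∂μ, HasSum (F · x) (b x) := by
  have hnorm := summable_norm_of_tsum_eLpNorm_ne_top le_rfl (fun i => (hF i).1)
    (by simpa only [eLpNorm_one_eq_lintegral_enorm]
      using tsum_lintegral_enorm_ne_top_of_summable_integral_norm hF hs)
  filter_upwards [hnorm, hb] with x hx hbx
  have hsum := hx.of_norm.hasSum
  rwa [tendsto_nhds_unique hsum.tendsto_sum_nat hbx] at hsum

theorem integrable_of_tendsto_sum_range (hF : ∀ i, Integrable (F i) μ)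
    (hs : Summable fun i => ∫ x, ‖F i x‖ ∂μ)
    (hb : ∀ᵐ x ∂μ, Tendsto (fun n => ∑ i ∈ Finset.range n, F i x) atTop (nhds (b x))) :
    Integrable b μ := by
  refine ⟨aestronglyMeasurable_of_tendsto_ae atTop
    (fun n => (integrable_finsetSum _ fun i _ => hF i).aestronglyMeasurable) hb, ?_⟩
  calc ∫⁻ x, ‖b x‖ₑ ∂μ ≤ ∫⁻ x, ∑' i, ‖F i x‖ₑ ∂μ :=
        lintegral_mono_ae <| (ae_hasSum_of_tendsto_sum_range hF hs hb).mono
          fun x hx => hx.tsum_eq ▸ enorm_tsum_le_tsum_enorm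
    _ = ∑' i, ∫⁻ x, ‖F i x‖ₑ ∂μ := lintegral_tsum fun i => (hF i).1.enorm
    _ < ∞ := (tsum_lintegral_enorm_ne_top_of_summable_integral_norm hF hs).lt_top

theorem hasSum_integral_of_tendsto_sum_range [NormedSpace ℝ E] (hF : ∀ i, Integrable (F i) μ)
    (hs : Summable fun i => ∫ x, ‖F i x‖ ∂μ)
    (hb : ∀ᵐ x ∂μ, Tendsto (fun n => ∑ i ∈ Finset.range n, F i x) atTop (nhds (b x))) :
    HasSum (fun i => ∫ x, F i x ∂μ) (∫ x, b x ∂μ) := by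
  rw [integral_congr_ae <| (ae_hasSum_of_tendsto_sum_range hF hs hb).mono
    fun x hx => hx.tsum_eq.symm]
  exact hasSum_integral_of_summable_integral_norm hF hs

end SeriesOfIntegrable

theorem ind_nonneg (s : Set Ω) (ω : Ω) : 0 ≤ ind s ω :=
  Set.indicator_nonneg (fun _ _ => zero_le_one) ω

section Balance

variable [MeasurableSpace Ω] {μ : Measure Ω} {P : Set Ω → ℝ} {α : ℕ → ℝ} {A : ℕ → Set Ω}

theorem integral_ind {s : Set Ω} (hs : MeasurableSet s) : ∫ ω, ind s ω ∂μ = μ.real s :=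
  integral_indicator_one hs

theorem integrable_ind [IsFiniteMeasure μ] {s : Set Ω} (hs : MeasurableSet s) :
    Integrable (ind s) μ :=
  (integrable_const 1).indicator hs

theorem integrable_bterm [IsFiniteMeasure μ] {i : ℕ} (hA : MeasurableSet (A i)) :
    Integrable (fun ω => bterm P α A ω i) μ :=
  ((integrable_ind hA).sub (integrable_const _)).const_mul _

variable [IsProbabilityMeasure μ]

theorem integral_bterm {i : ℕ} (hA : MeasurableSet (A i)) (hPA : μ.real (A i) = P (A i)) :
    ∫ ω, bterm P α A ω i ∂μ = 0 := by
  simp only [bterm]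
  rw [integral_const_mul, integral_sub (integrable_ind hA) (integrable_const _),
    integral_ind hA, integral_const, hPA]
  simp

theorem integral_norm_bterm_le {i : ℕ} (hA : MeasurableSet (A i))
    (hPA : μ.real (A i) = P (A i)) :
    ∫ ω, ‖bterm P α A ω i‖ ∂μ ≤ 2 * (|α i| * P (A i)) := by
  have hP : 0 ≤ P (A i) := hPA ▸ measureReal_nonneg
  have hpoint (ω : Ω) : ‖bterm P α A ω i‖ ≤ |α i| * (ind (A i) ω + P (A i)) := by
    rw [bterm, Real.norm_eq_abs, abs_mul]
    gcongr
    refine (abs_sub _ _).trans_eq ?_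
    rw [abs_of_nonneg (ind_nonneg _ ω), abs_of_nonneg hP]
  calc ∫ ω, ‖bterm P α A ω i‖ ∂μ ≤ ∫ ω, |α i| * (ind (A i) ω + P (A i)) ∂μ :=
        integral_mono (integrable_bterm hA).norm
          (((integrable_ind hA).add (integrable_const _)).const_mul _) hpoint
    _ = 2 * (|α i| * P (A i)) := by
        rw [integral_const_mul, integral_add (integrable_ind hA) (integrable_const _),
          integral_ind hA, integral_const, hPA]
        simp only [probReal_univ, smul_eq_mul, one_mul]
        ring

theorem integrable_and_integral_eq_zero_of_seriesTendsTo_bterm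
    (hA : ∀ i, MeasurableSet (A i)) (hPA : ∀ i, μ.real (A i) = P (A i))
    (hs : Summable fun i => |α i| * P (A i)) {b : Ω → ℝ}
    (hb : ∀ ω, SeriesTendsTo (bterm P α A ω) (b ω)) :
    Integrable b μ ∧ ∫ ω, b ω ∂μ = 0 := by
  have hint (i : ℕ) : Integrable (fun ω => bterm P α A ω i) μ := integrable_bterm (hA i)
  have hnorm : Summable fun i => ∫ ω, ‖bterm P α A ω i‖ ∂μ :=
    (hs.mul_left 2).of_nonneg_of_le (fun i => integral_nonneg fun ω => norm_nonneg _)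
      fun i => integral_norm_bterm_le (hA i) (hPA i)
  have hb_ae := Eventually.of_forall (f := ae μ) hb
  refine ⟨integrable_of_tendsto_sum_range hint hnorm hb_ae, ?_⟩
  refine (hasSum_integral_of_tendsto_sum_range hint hnorm hb_ae).unique ?_
  simpa only [integral_bterm (hA _) (hPA _)] using hasSum_zero

end Balance

theorem stmt2_general {Ω : Type*} [m : MeasurableSpace Ω] (C : Set (Set Ω)) (P : Set Ω → ℝ)
    (hP : IsCAProb C P)
    (hm : m = MeasurableSpace.generateFrom C)
    (μ : Measure Ω) [IsProbabilityMeasure μ]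
    (hμ : ∀ A ∈ C, μ A = ENNReal.ofReal (P A)) :
    (∀ α A, System2 C P α A → ∀ b : Ω → ℝ,
      (∀ ω, SeriesTendsTo (bterm P α A ω) (b ω)) →
      Integrable b μ ∧ ∫ ω, b ω ∂μ = 0 ∧ ∃ ω, 0 ≤ b ω) ∧
    CoherentIn P (System2 C P) := by
  have hbalance : ∀ α A, System2 C P α A → ∀ b : Ω → ℝ,
      (∀ ω, SeriesTendsTo (bterm P α A ω) (b ω)) →
      Integrable b μ ∧ ∫ ω, b ω ∂μ = 0 ∧ ∃ ω, 0 ≤ b ω := by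
    rintro α A ⟨hAC, hs, -⟩ b hb
    have hA (i : ℕ) : MeasurableSet (A i) :=
      hm ▸ MeasurableSpace.measurableSet_generateFrom (hAC i)
    have hPA (i : ℕ) : μ.real (A i) = P (A i) := by
      rw [measureReal_def, hμ _ (hAC i), ENNReal.toReal_ofReal (hP.2.1 _ (hAC i))]
    obtain ⟨hint, hzero⟩ :=
      integrable_and_integral_eq_zero_of_seriesTendsTo_bterm hA hPA hs hb
    obtain ⟨ω, hω⟩ := exists_integral_le hint
    exact ⟨hint, hzero, ω, hzero ▸ hω⟩
  refine ⟨hbalance, ?_⟩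
  rintro ⟨α, A, hS, ε, hε, hloss⟩
  choose L hL hLε using hloss
  obtain ⟨-, -, ω, hω⟩ := hbalance α A hS L hL
  linarith [hLε ω]

theorem stmt2 {Ω : Type*} [m : MeasurableSpace Ω] (C : Set (Set Ω)) (P : Set Ω → ℝ)
    (hC : IsSetField C) (hP : IsCAProb C P)
    (hm : m = MeasurableSpace.generateFrom C)
    (μ : Measure Ω) [IsProbabilityMeasure μ]
    (hμ : ∀ A ∈ C, μ A = ENNReal.ofReal (P A)) :
    (∀ α A, System2 C P α A → ∀ b : Ω → ℝ,
      (∀ ω, SeriesTendsTo (bterm P α A ω) (b ω)) →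
      Integrable b μ ∧ ∫ ω, b ω ∂μ = 0 ∧ ∃ ω, 0 ≤ b ω) ∧
    CoherentIn P (System2 C P) :=
  stmt2_general (m := m) C P hP hm μ hμ
end

section
/- Let Ω = (0,1), A_i = (0, 1/(i+1)), 𝒞 = {A_i : i ≥ 1}, and P(A_i) = 1/(i+1) + δ with δ > 0 and P(A_i) ≤ 1. Then P is coherent in betting system 2 on 𝒞: no portfolio (β_i, B_i) with B_i ∈ 𝒞, Σ|β_i|P(B_i) < ∞ and pointwise-convergent balance yields uniform sure loss. -/
open Filter MeasureTheory ENNReal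

variable {Ω : Type*}

abbrev Ω01 : Type := Set.Ioo (0:ℝ) 1

def A01 (i : ℕ) : Set Ω01 := {ω | (ω : ℝ) < 1 / ((i : ℝ) + 1)}

/-!
A portfolio with uniform sure loss would have negative expectation under every probability
that prices each of its bets fairly. Such a probability exists once the limit point `0` is
added to `(0, 1)`: mass `δ` at `0` and mass `1/m - 1/(m+1)` at `1/(m+1)` (less `δ` at `1/2`)
give `A_k` the mass `δ + 1/(k+1) = P(A_k)`. As `P(A_i) ≥ δ`, the stakes are absolutely
summable, so Fubini makes the expected balance `0`; yet the balance is `≤ -ε` on `(0, 1)` and,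
by dominated convergence, also at `0`.
-/

open Topology

theorem hasSum_sub_succ_of_antitone {f : ℕ → ℝ} {l : ℝ} (hf : Antitone f)
    (hl : Tendsto f atTop (𝓝 l)) : HasSum (fun n => f n - f (n + 1)) (f 0 - l) := by
  rw [hasSum_iff_tendsto_nat_of_nonneg fun n => sub_nonneg.2 (hf n.le_succ)]
  simpa only [Finset.sum_range_sub'] using tendsto_const_nhds.sub hl

theorem summable_mul_of_abs_le {ι : Type*} {α y : ι → ℝ} (hα : Summable fun i => |α i|)
    {B : ℝ} (hy : ∀ i, |y i| ≤ B) : Summable fun i => α i * y i :=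
  (hα.mul_right B).of_norm_bounded fun i => by
    rw [Real.norm_eq_abs, abs_mul]
    exact mul_le_mul_of_nonneg_left (hy i) (abs_nonneg _)

theorem summable_abs_of_summable_abs_mul {ι : Type*} {α q : ι → ℝ} {δ : ℝ} (hδ : 0 < δ)
    (hq : ∀ i, δ ≤ q i) (h : Summable fun i => |α i| * q i) : Summable fun i => |α i| :=
  (h.mul_left δ⁻¹).of_nonneg_of_le (fun i => abs_nonneg _) fun i => by
    rw [le_inv_mul_iff₀ hδ, mul_comm]
    exact mul_le_mul_of_nonneg_left (hq i) (abs_nonneg _)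

theorem hasSum_mul_tsum_eq_zero {κ ι : Type*} {w : κ → ℝ} (hw0 : 0 ≤ w) (hw : Summable w)
    {α : ι → ℝ} (hα : Summable fun i => |α i|) {x : κ → ι → ℝ} {B : ℝ}
    (hB : ∀ m i, |x m i| ≤ B) (hx : ∀ i, HasSum (fun m => w m * x m i) 0) :
    HasSum (fun m => w m * ∑' i, α i * x m i) 0 := by
  set F : ι × κ → ℝ := fun q => w q.2 * (α q.1 * x q.2 q.1)
  have hF : Summable F := by
    refine ((hα.mul_of_nonneg hw (fun i => abs_nonneg _) hw0).mul_left B).of_norm_bounded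
      fun q => ?_
    rw [Real.norm_eq_abs, abs_mul, abs_mul, abs_of_nonneg (hw0 q.2)]
    calc w q.2 * (|α q.1| * |x q.2 q.1|) ≤ w q.2 * (|α q.1| * B) :=
          mul_le_mul_of_nonneg_left (mul_le_mul_of_nonneg_left (hB _ _) (abs_nonneg _)) (hw0 _)
      _ = B * (|α q.1| * w q.2) := by ring
  have hfiber (i : ι) : HasSum (fun m => F (i, m)) 0 := by
    simpa only [mul_zero, mul_left_comm] using (hx i).mul_left (α i)
  have hF0 : HasSum F 0 := by
    obtain ⟨a, ha⟩ := hF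
    rwa [(ha.prod_fiberwise hfiber).unique hasSum_zero] at ha
  refine ((Equiv.prodComm κ ι).hasSum_iff.2 hF0).prod_fiberwise fun m => ?_
  exact (summable_mul_of_abs_le hα (hB m)).hasSum.mul_left (w m)

theorem exists_neg_lt_tsum_mul_of_hasSum_zero {κ ι : Type*} {w : κ → ℝ} (hw0 : 0 ≤ w)
    (hw : HasSum w 1) {α : ι → ℝ} (hα : Summable fun i => |α i|) {x : κ → ι → ℝ} {B : ℝ}
    (hB : ∀ m i, |x m i| ≤ B) (hx : ∀ i, HasSum (fun m => w m * x m i) 0) {ε : ℝ}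
    (hε : 0 < ε) : ∃ m, -ε < ∑' i, α i * x m i := by
  by_contra! hloss
  have hmean := hasSum_mul_tsum_eq_zero hw0 hw.summable hα hB hx
  have : (0 : ℝ) ≤ -ε := by
    simpa using hasSum_le (fun m => mul_le_mul_of_nonneg_left (hloss m) (hw0 m)) hmean
      (hw.mul_right (-ε))
  linarith

theorem SeriesTendsTo.eq_tsum {f : ℕ → ℝ} {L : ℝ} (h : SeriesTendsTo f L) (hf : Summable f) :
    L = ∑' i, f i :=
  tendsto_nhds_unique h hf.hasSum.tendsto_sum_nat

theorem abs_indicator_one_sub_le_one {X : Type*} (s : Set X) (x : X) {p : ℝ} (hp0 : 0 ≤ p)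
    (hp1 : p ≤ 1) : |s.indicator 1 x - p| ≤ 1 := by
  rw [abs_le]
  by_cases hx : x ∈ s
  · rw [Set.indicator_of_mem hx, Pi.one_apply]
    constructor <;> linarith
  · rw [Set.indicator_of_notMem hx]
    constructor <;> linarith

-- The balance of the bets on `Iio (r i)`, defined at every real point, `0` included.
noncomputable def payoff (r α p : ℕ → ℝ) (x : ℝ) : ℝ :=
  ∑' i, α i * ((Set.Iio (r i)).indicator 1 x - p i)

theorem continuousAt_payoff {r α p : ℕ → ℝ} (hα : Summable fun i => |α i|)
    (hp0 : ∀ i, 0 ≤ p i) (hp1 : ∀ i, p i ≤ 1) {x : ℝ} (hx : ∀ i, x < r i) :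
    ContinuousAt (payoff r α p) x := by
  refine tendsto_tsum_of_dominated_convergence hα (fun i => ?_) (.of_forall fun y i => ?_)
  · refine tendsto_const_nhds.congr' ?_
    filter_upwards [Iio_mem_nhds (hx i)] with y hy
    simp [hy, hx i]
  · rw [Real.norm_eq_abs, abs_mul]
    exact mul_le_of_le_one_right (abs_nonneg _)
      (abs_indicator_one_sub_le_one _ _ (hp0 i) (hp1 i))

theorem ind_A01 (k : ℕ) (ω : Ω01) :
    ind (A01 k) ω = (Set.Iio (1 / ((k : ℝ) + 1))).indicator 1 (ω : ℝ) := by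
  simp [ind, A01, Set.indicator_apply]

theorem payoff_eq_of_seriesTendsTo {P : Set Ω01 → ℝ} {k : ℕ → ℕ} {α : ℕ → ℝ}
    (hα : Summable fun i => |α i|) (hp0 : ∀ i, 0 ≤ P (A01 (k i)))
    (hp1 : ∀ i, P (A01 (k i)) ≤ 1) {ω : Ω01} {L : ℝ}
    (h : SeriesTendsTo (bterm P α (fun i => A01 (k i)) ω) L) :
    payoff (fun i => 1 / ((k i : ℝ) + 1)) α (fun i => P (A01 (k i))) ω = L := by
  unfold bterm at h
  simp only [ind_A01] at h
  exact (h.eq_tsum (summable_mul_of_abs_le hα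
    fun i => abs_indicator_one_sub_le_one _ _ (hp0 i) (hp1 i))).symm

-- Its differences telescope to the tail sums `∑_{m > k} (1/m - 1/(m+1)) = 1/(k+1)`.
noncomputable def harmonicTail (k m : ℕ) : ℝ := 1 / (max m (k + 1) : ℕ)

theorem antitone_harmonicTail (k : ℕ) : Antitone (harmonicTail k) := fun m n hmn =>
  one_div_le_one_div_of_le (by positivity) (by exact_mod_cast max_le_max_right _ hmn)

theorem hasSum_harmonicTail_sub (k : ℕ) :
    HasSum (fun m => harmonicTail k m - harmonicTail k (m + 1)) (1 / ((k : ℝ) + 1)) := by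
  have hlim : Tendsto (harmonicTail k) atTop (𝓝 0) :=
    tendsto_one_div_atTop_nhds_zero_nat.congr' <|
      (eventually_ge_atTop (k + 1)).mono fun m hm => by simp [harmonicTail, max_eq_left hm]
  simpa [harmonicTail] using hasSum_sub_succ_of_antitone (antitone_harmonicTail k) hlim

theorem harmonicTail_sub_succ (k m : ℕ) :
    harmonicTail k m - harmonicTail k (m + 1) =
      if k < m then harmonicTail 0 m - harmonicTail 0 (m + 1) else 0 := by
  unfold harmonicTail
  split_ifs with h
  · rw [max_eq_left (by omega : k + 1 ≤ m), max_eq_left (by omega : k + 1 ≤ m + 1),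
      max_eq_left (by omega : 0 + 1 ≤ m), max_eq_left (by omega : 0 + 1 ≤ m + 1)]
  · rw [max_eq_right (by omega : m ≤ k + 1), max_eq_right (by omega : m + 1 ≤ k + 1), sub_self]

noncomputable def atom (m : ℕ) : ℝ := if m = 0 then 0 else 1 / ((m : ℝ) + 1)

noncomputable def atomMass (δ : ℝ) (m : ℕ) : ℝ :=
  (if m = 0 then δ else 0) - (if m = 1 then δ else 0) +
    (harmonicTail 0 m - harmonicTail 0 (m + 1))

theorem atom_mem_Ioo {m : ℕ} (hm : m ≠ 0) : atom m ∈ Set.Ioo 0 1 := by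
  have : (1 : ℝ) ≤ m := by exact_mod_cast Nat.one_le_iff_ne_zero.2 hm
  rw [atom, if_neg hm]
  exact ⟨by positivity, (div_lt_one (by positivity)).2 (by linarith)⟩

theorem atom_lt_iff (k m : ℕ) : atom m < 1 / ((k : ℝ) + 1) ↔ m = 0 ∨ k < m := by
  rcases eq_or_ne m 0 with rfl | hm
  · rw [atom, if_pos rfl]
    exact iff_of_true (by positivity) (Or.inl rfl)
  · rw [atom, if_neg hm, one_div_lt_one_div (by positivity) (by positivity)]
    simp [hm]

theorem atomMass_nonneg {δ : ℝ} (hδ0 : 0 ≤ δ) (hδ1 : δ ≤ 1 / 2) : 0 ≤ atomMass δ := by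
  intro m
  rcases m with _ | _ | m
  · simpa [atomMass, harmonicTail] using hδ0
  · show 0 ≤ atomMass δ 1
    linarith [show atomMass δ 1 = -δ + 1 / 2 by norm_num [atomMass, harmonicTail]]
  · simpa [atomMass] using sub_nonneg.2 (antitone_harmonicTail 0 (m + 2).le_succ)

theorem hasSum_atomMass (δ : ℝ) : HasSum (atomMass δ) 1 := by
  have h := ((hasSum_ite_eq 0 δ).sub (hasSum_ite_eq 1 δ)).add (hasSum_harmonicTail_sub 0)
  rwa [sub_self, zero_add, Nat.cast_zero, zero_add, div_one] at h

theorem hasSum_atomMass_mul_indicator (δ : ℝ) {k : ℕ} (hk : 1 ≤ k) :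
    HasSum (fun m => atomMass δ m * (Set.Iio (1 / ((k : ℝ) + 1))).indicator 1 (atom m))
      (δ + 1 / ((k : ℝ) + 1)) := by
  convert (hasSum_ite_eq 0 δ).add (hasSum_harmonicTail_sub k) using 2 with m
  rw [harmonicTail_sub_succ k m]
  simp only [Set.indicator_apply, Set.mem_Iio, atom_lt_iff]
  rcases m with _ | _ | m
  · simp [atomMass, harmonicTail]
  · simp [atomMass, Nat.one_le_iff_ne_zero.1 hk]
  · simp [atomMass]

theorem hasSum_atomMass_mul_indicator_sub (δ : ℝ) {k : ℕ} (hk : 1 ≤ k) :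
    HasSum (fun m => atomMass δ m *
      ((Set.Iio (1 / ((k : ℝ) + 1))).indicator 1 (atom m) - (1 / ((k : ℝ) + 1) + δ))) 0 := by
  have h := (hasSum_atomMass_mul_indicator δ hk).sub
    ((hasSum_atomMass δ).mul_left (1 / ((k : ℝ) + 1) + δ))
  rw [mul_one, add_comm δ, sub_self] at h
  simpa only [mul_sub, mul_comm _ (atomMass δ _)] using h

theorem payoff_atom_le {r α p : ℕ → ℝ} (hα : Summable fun i => |α i|) (hp0 : ∀ i, 0 ≤ p i)
    (hp1 : ∀ i, p i ≤ 1) (hr : ∀ i, 0 < r i) {c : ℝ}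
    (h : ∀ x ∈ Set.Ioo (0 : ℝ) 1, payoff r α p x ≤ c) (m : ℕ) : payoff r α p (atom m) ≤ c := by
  rcases eq_or_ne m 0 with rfl | hm
  · have hcont := (continuousAt_payoff hα hp0 hp1 hr).mono_left
      (nhdsWithin_le_nhds (s := Set.Ioi 0))
    simpa [atom] using le_of_tendsto hcont (mem_of_superset (Ioo_mem_nhdsGT zero_lt_one) h)
  · exact h _ (atom_mem_Ioo hm)

theorem stmt5 (δ : ℝ) (hδ : 0 < δ) (P : Set Ω01 → ℝ)
    (hP : ∀ i, 1 ≤ i → P (A01 i) = 1 / ((i : ℝ) + 1) + δ)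
    (hle : ∀ i, 1 ≤ i → P (A01 i) ≤ 1) :
    CoherentIn P (System2 {S | ∃ i, 1 ≤ i ∧ S = A01 i} P) := by
  rintro ⟨α, A, ⟨hAC, hsum, -⟩, ε, hε, hloss⟩
  choose k hk hkA using hAC
  obtain rfl : A = fun i => A01 (k i) := funext hkA
  set r : ℕ → ℝ := fun i => 1 / ((k i : ℝ) + 1)
  set p : ℕ → ℝ := fun i => P (A01 (k i))
  have hp (i : ℕ) : p i = r i + δ := hP _ (hk i)
  have hr (i : ℕ) : 0 < r i := by positivity
  have hp0 (i : ℕ) : 0 ≤ p i := by linarith [hp i, hr i]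
  have hp1 (i : ℕ) : p i ≤ 1 := hle _ (hk i)
  have hδ2 : δ ≤ 1 / 2 := by linarith [hP 1 le_rfl, hle 1 le_rfl]
  have hα := summable_abs_of_summable_abs_mul hδ (fun i => by linarith [hp i, hr i]) hsum
  have hloss_atom (m : ℕ) : payoff r α p (atom m) ≤ -ε := by
    refine payoff_atom_le hα hp0 hp1 hr (fun x hx => ?_) m
    obtain ⟨L, hL, hLε⟩ := hloss ⟨x, hx⟩
    exact (payoff_eq_of_seriesTendsTo hα hp0 hp1 hL).trans_le hLε
  obtain ⟨m, hm⟩ := exists_neg_lt_tsum_mul_of_hasSum_zero (atomMass_nonneg hδ.le hδ2)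
    (hasSum_atomMass δ) hα (x := fun m i => (Set.Iio (r i)).indicator 1 (atom m) - p i)
    (fun m i => abs_indicator_one_sub_le_one _ _ (hp0 i) (hp1 i))
    (fun i => by simpa only [hp] using hasSum_atomMass_mul_indicator_sub δ (hk i)) hε
  exact (hloss_atom m).not_gt hm
end

section
/- Let 𝒞 be a field, P a countably additive probability such that Ω admits a finite partition {F_1,…,F_n} into 𝒞-measurable atoms, and P* the extension of P to σ(𝒞). Then every betting portfolio in betting system 3 has balance with P*-expectation 0; hence P is coherent in betting system 3. -/
open Filter MeasureTheory ENNReal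

variable {Ω : Type*}

/-! An atom `F j` meets each bet set `A i` in almost all or almost none of its mass, so outside
a null set every partial balance, and hence the balance, is constant on each atom. The expectation
of such a function is `∑ j, μ (F j) * (its value at a point w j ∈ F j)`. The partial balances have
expectation `0` because `μ` agrees with `P` on `C`; letting the number of bets tend to infinity at
the finitely many points `w j` gives expectation `0` for the balance. A balance bounded above by
`-ε` would have negative expectation, so `P` is coherent. -/

theorem IsSetField.inter_mem {C : Set (Set Ω)} (hC : IsSetField C) {A B : Set Ω}
    (hA : A ∈ C) (hB : B ∈ C) : A ∩ B ∈ C := by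
  obtain ⟨-, hcompl, hunion⟩ := hC
  simpa using hcompl _ (hunion _ (hcompl _ hA) _ (hcompl _ hB))

theorem SeriesTendsTo.unique {f : ℕ → ℝ} {x y : ℝ} (hx : SeriesTendsTo f x)
    (hy : SeriesTendsTo f y) : x = y :=
  tendsto_nhds_unique hx hy

theorem bterm_congr {P : Set Ω → ℝ} {α : ℕ → ℝ} {A : ℕ → Set Ω} {ω ω' : Ω}
    (h : ∀ i, ω ∈ A i ↔ ω' ∈ A i) : bterm P α A ω = bterm P α A ω' := by
  classical
  funext i
  simp only [bterm, ind, Set.indicator_apply, h i]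

section Measure

variable [MeasurableSpace Ω] {μ : Measure Ω}

theorem ae_mem_iff_measure_inter_ne_zero [IsFiniteMeasure μ] {A F : Set Ω}
    (hA : MeasurableSet A) (hAF : μ (A ∩ F) = μ F ∨ μ (A ∩ F) = 0) :
    ∀ᵐ ω ∂μ, ω ∈ F → (ω ∈ A ↔ μ (A ∩ F) ≠ 0) := by
  by_cases h0 : μ (A ∩ F) = 0
  · filter_upwards [measure_eq_zero_iff_ae_notMem.1 h0] with ω hω hωF
    simpa [h0, hωF] using hω
  · have hFA : μ (F \ A) = 0 := by
      have hsplit := measure_inter_add_sdiff F hA (μ := μ)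
      rw [Set.inter_comm, hAF.resolve_right h0] at hsplit
      exact (ENNReal.add_right_inj (measure_ne_top μ F)).1 (hsplit.trans (add_zero _).symm)
    filter_upwards [measure_eq_zero_iff_ae_notMem.1 hFA] with ω hω hωF
    simpa [h0, hωF] using hω

theorem integral_eq_sum_of_ae_eq_on_partition [IsFiniteMeasure μ] {ι : Type*} [Fintype ι]
    {F : ι → Set Ω} (hF : ∀ j, MeasurableSet (F j)) (hdisj : Pairwise (Function.onFun Disjoint F))
    (hcover : ⋃ j, F j = Set.univ) {f : Ω → ℝ} {c : ι → ℝ}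
    (hf : ∀ᵐ ω ∂μ, ∀ j, ω ∈ F j → f ω = c j) :
    Integrable f μ ∧ ∫ ω, f ω ∂μ = ∑ j, μ.real (F j) * c j := by
  classical
  have hstep : (fun ω => ∑ j, (F j).indicator (fun _ => c j) ω) =ᵐ[μ] f := by
    filter_upwards [hf] with ω hω
    obtain ⟨j, hj⟩ := Set.mem_iUnion.1 (hcover ▸ Set.mem_univ ω)
    rw [Finset.sum_eq_single j, Set.indicator_of_mem hj, hω j hj]
    · exact fun k _ hk => Set.indicator_of_notMem (Set.disjoint_right.1 (hdisj hk) hj) _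
    · simp
  have hint : ∀ j, Integrable ((F j).indicator fun _ => c j) μ :=
    fun j => (integrable_const _).indicator (hF j)
  refine ⟨(integrable_finsetSum _ fun j _ => hint j).congr hstep, ?_⟩
  rw [← integral_congr_ae hstep, integral_finsetSum _ fun j _ => hint j]
  simp [integral_indicator_const _ (hF _)]

theorem integral_sum_bterm_eq_zero [IsProbabilityMeasure μ] {P : Set Ω → ℝ} {α : ℕ → ℝ}
    {A : ℕ → Set Ω} (hA : ∀ i, MeasurableSet (A i)) (hμA : ∀ i, μ.real (A i) = P (A i))
    (s : Finset ℕ) : ∫ ω, ∑ i ∈ s, bterm P α A ω i ∂μ = 0 := by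
  have hind : ∀ i, Integrable (ind (A i)) μ := fun i => (integrable_const 1).indicator (hA i)
  have hterm : ∀ i, Integrable (fun ω => α i * (ind (A i) ω - P (A i))) μ :=
    fun i => ((hind i).sub (integrable_const _)).const_mul _
  simp only [bterm]
  rw [integral_finsetSum _ fun i _ => hterm i]
  refine Finset.sum_eq_zero fun i _ => ?_
  have hexp : ∫ ω, ind (A i) ω ∂μ = μ.real (A i) := integral_indicator_one (hA i)
  rw [integral_const_mul, integral_sub (hind i) (integrable_const _), hexp]
  simp [hμA]

theorem integrable_and_integral_eq_zero_of_atoms [IsProbabilityMeasure μ] {ι : Type*}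
    [Fintype ι] {F : ι → Set Ω} (hF : ∀ j, MeasurableSet (F j)) (hFpos : ∀ j, μ (F j) ≠ 0)
    (hdisj : Pairwise (Function.onFun Disjoint F)) (hcover : ⋃ j, F j = Set.univ)
    {P : Set Ω → ℝ} {α : ℕ → ℝ} {A : ℕ → Set Ω} (hA : ∀ i, MeasurableSet (A i))
    (hμA : ∀ i, μ.real (A i) = P (A i))
    (hatom : ∀ i j, μ (A i ∩ F j) = μ (F j) ∨ μ (A i ∩ F j) = 0)
    {b : Ω → ℝ} (hb : ∀ ω, SeriesTendsTo (bterm P α A ω) (b ω)) :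
    Integrable b μ ∧ ∫ ω, b ω ∂μ = 0 := by
  have hgood : ∀ᵐ ω ∂μ, ∀ j, ω ∈ F j → ∀ i, (ω ∈ A i ↔ μ (A i ∩ F j) ≠ 0) := by
    refine ae_all_iff.2 fun j => ?_
    filter_upwards [ae_all_iff.2 fun i => ae_mem_iff_measure_inter_ne_zero (hA i) (hatom i j)]
      with ω hω hωF i using hω i hωF
  choose w hwF hw using fun j =>
    Measure.exists_mem_of_measure_ne_zero_of_ae (hFpos j)
      ((ae_restrict_iff' (hF j)).2 (hgood.mono fun ω hω => hω j))
  have hcell : ∀ᵐ ω ∂μ, ∀ j, ω ∈ F j → bterm P α A ω = bterm P α A (w j) := by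
    filter_upwards [hgood] with ω hω j hωF
    exact bterm_congr fun i => (hω j hωF i).trans (hw j i).symm
  have hpartial : ∀ N, ∑ j, μ.real (F j) * ∑ i ∈ Finset.range N, bterm P α A (w j) i = 0 :=
    fun N => by
      rw [← (integral_eq_sum_of_ae_eq_on_partition hF hdisj hcover
        (f := fun ω => ∑ i ∈ Finset.range N, bterm P α A ω i)
        (hcell.mono fun ω hω j hj => by rw [hω j hj])).2]
      exact integral_sum_bterm_eq_zero hA hμA _
  obtain ⟨hint, hintegral⟩ := integral_eq_sum_of_ae_eq_on_partition hF hdisj hcover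
    (f := b) (hcell.mono fun ω hω j hj =>
      (hb ω).unique (by rw [hω j hj]; exact hb (w j)))
  have hlim : Tendsto (fun N => ∑ j, μ.real (F j) * ∑ i ∈ Finset.range N, bterm P α A (w j) i)
      atTop (nhds (∑ j, μ.real (F j) * b (w j))) :=
    tendsto_finsetSum _ fun j _ => (hb (w j)).const_mul _
  simp only [hpartial] at hlim
  exact ⟨hint, hintegral.trans (tendsto_const_nhds_iff.1 hlim).symm⟩

theorem coherentIn_of_integral_eq_zero [IsProbabilityMeasure μ] {P : Set Ω → ℝ}
    {S : (ℕ → ℝ) → (ℕ → Set Ω) → Prop}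
    (h : ∀ α A, S α A → ∀ b : Ω → ℝ, (∀ ω, SeriesTendsTo (bterm P α A ω) (b ω)) →
      Integrable b μ ∧ ∫ ω, b ω ∂μ = 0) :
    CoherentIn P S := by
  rintro ⟨α, A, hS, ε, hε, hL⟩
  choose b hb hbε using hL
  obtain ⟨hint, hzero⟩ := h α A hS b hb
  have := integral_mono hint (integrable_const (-ε)) hbε
  simp only [hzero, integral_const, probReal_univ, smul_eq_mul, one_mul] at this
  linarith

end Measure

theorem stmt9 {Ω : Type*} [m : MeasurableSpace Ω] (C : Set (Set Ω)) (P : Set Ω → ℝ)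
    (hC : IsSetField C) (hP : IsCAProb C P)
    (hatoms : FiniteAtomicPartition C P)
    (hm : m = MeasurableSpace.generateFrom C)
    (μ : Measure Ω) [IsProbabilityMeasure μ]
    (hμ : ∀ A ∈ C, μ A = ENNReal.ofReal (P A)) :
    (∀ α A, System3 C P α A → ∀ b : Ω → ℝ,
      (∀ ω, SeriesTendsTo (bterm P α A ω) (b ω)) →
      Integrable b μ ∧ ∫ ω, b ω ∂μ = 0) ∧
    CoherentIn P (System3 C P) := by
  obtain ⟨n, F, hatom, hdisj, hcover⟩ := hatoms
  have hmeas : ∀ B ∈ C, MeasurableSet B := fun B hB => hm ▸ .basic B hB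
  have hreal : ∀ B ∈ C, μ.real B = P B := fun B hB => by
    rw [measureReal_def, hμ B hB, toReal_ofReal (hP.2.1 B hB)]
  have main : ∀ α A, System3 C P α A → ∀ b : Ω → ℝ,
      (∀ ω, SeriesTendsTo (bterm P α A ω) (b ω)) → Integrable b μ ∧ ∫ ω, b ω ∂μ = 0 := by
    rintro α A ⟨hAC, -, -⟩ b hb
    refine integrable_and_integral_eq_zero_of_atoms (fun j => hmeas _ (hatom j).1)
      (fun j => by simpa [hμ _ (hatom j).1] using (hatom j).2.1)
      hdisj hcover (fun i => hmeas _ (hAC i)) (fun i => hreal _ (hAC i)) (fun i j => ?_) hb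
    have hAF := hC.inter_mem (hAC i) (hatom j).1
    rw [hμ _ hAF, hμ _ (hatom j).1]
    rcases (hatom j).2.2 _ hAF Set.inter_subset_right with h | h <;> simp [h]
  exact ⟨main, coherentIn_of_integral_eq_zero main⟩
end

section
/- Let Ω = {0,1}^ℕ, A_i = {ω : ω_i = 1}, 𝒞 = {A_i : i ≥ 1}, and P(A_i) = 1/2 − 4^{-i}. Then P is coherent in betting system 3 on 𝒞, yet no extension of P to the field generated by 𝒞 is coherent in betting system 3. -/
open Filter MeasureTheory ENNReal

variable {Ω : Type*}

def AB (i : ℕ) : Set (ℕ → Bool) := {ω | ω i = true}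

/-!
Coherence on `𝒞`: were every balance eventually `≤ -ε`, the partial payoffs
`∑_{i<n} α i ω (j i)` would converge for every `ω`, so by Baire's theorem on Cantor space they are
bounded by some `K` uniformly in `n` and `ω`. Averaging them over `N` points whose coordinate
frequencies approximate `P` from below within `1/N` gives `N s ≤ N (s - ε) + K`, absurd for
large `N`.

Incoherence on a field: a coherent `Q` must be finitely additive (else three bets make a sure
loss), and a finitely additive `Q` with infinitely many values has an infinite disjoint family of
sets `T k` with `Q (T k) ≠ 0`. Buying and later selling each `T k` with fee `1/(k+1)`, in the order
of a rearranged harmonic series, makes the fees converge to `log 2` while the payoffs cancel at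
every `ω`.
-/

open Finset Function Topology Pointwise

namespace IsSetField

variable {D : Set (Set Ω)}

lemma inter_mem_s12 (hD : IsSetField D) {A B : Set Ω} (hA : A ∈ D) (hB : B ∈ D) : A ∩ B ∈ D := by
  simpa [Set.compl_union] using hD.2.1 _ (hD.2.2 _ (hD.2.1 A hA) _ (hD.2.1 B hB))

lemma diff_mem (hD : IsSetField D) {A B : Set Ω} (hA : A ∈ D) (hB : B ∈ D) : A \ B ∈ D :=
  hD.inter_mem_s12 hA (hD.2.1 B hB)

end IsSetField

def IsAdditiveOn (D : Set (Set Ω)) (Q : Set Ω → ℝ) : Prop :=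
  ∀ A ∈ D, ∀ B ∈ D, Disjoint A B → Q (A ∪ B) = Q A + Q B

namespace IsAdditiveOn

variable {D : Set (Set Ω)} {Q : Set Ω → ℝ}

lemma image_subsets_subset_add (hQ : IsAdditiveOn D Q) (hD : IsSetField D) (A : Set Ω)
    {B : Set Ω} (hB : B ∈ D) :
    Q '' {C ∈ D | C ⊆ A} ⊆ Q '' {C ∈ D | C ⊆ B} + Q '' {C ∈ D | C ⊆ A \ B} := by
  rintro _ ⟨C, ⟨hC, hCA⟩, rfl⟩
  refine ⟨Q (C ∩ B), ⟨C ∩ B, ⟨hD.inter_mem_s12 hC hB, Set.inter_subset_right⟩, rfl⟩,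
    Q (C \ B), ⟨C \ B, ⟨hD.diff_mem hC hB, Set.sdiff_subset_sdiff_left hCA⟩, rfl⟩, ?_⟩
  dsimp only
  rw [← hQ _ (hD.inter_mem_s12 hC hB) _ (hD.diff_mem hC hB) Set.disjoint_sdiff_inter.symm,
    Set.inter_union_sdiff]

lemma exists_split (hQ : IsAdditiveOn D Q) (hD : IsSetField D) {A : Set Ω} (hA : A ∈ D)
    (hinf : (Q '' {C ∈ D | C ⊆ A}).Infinite) :
    ∃ B ∈ D, B ⊆ A ∧ Q B ≠ 0 ∧ (Q '' {C ∈ D | C ⊆ A \ B}).Infinite := by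
  obtain ⟨_, ⟨C, ⟨hC, hCA⟩, rfl⟩, hQC⟩ := (hinf.sdiff (Set.toFinite {0, Q A})).nonempty
  simp only [Set.mem_insert_iff, Set.mem_singleton_iff, not_or] at hQC
  by_cases hrest : (Q '' {C' ∈ D | C' ⊆ A \ C}).Infinite
  · exact ⟨C, hC, hCA, hQC.1, hrest⟩
  refine ⟨A \ C, hD.diff_mem hA hC, Set.sdiff_subset, fun h => hQC.2 ?_, ?_⟩
  · have := hQ C hC (A \ C) (hD.diff_mem hA hC) Set.disjoint_sdiff_right
    rw [Set.union_sdiff_cancel hCA] at this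
    linarith
  · rw [Set.sdiff_sdiff_cancel_left hCA]
    by_contra hfin
    exact hinf (((Set.not_infinite.mp hfin).add (Set.not_infinite.mp hrest)).subset
      (hQ.image_subsets_subset_add hD A hC))

lemma exists_pairwise_disjoint (hQ : IsAdditiveOn D Q) (hD : IsSetField D)
    (hinf : (Q '' D).Infinite) :
    ∃ T : ℕ → Set Ω, (∀ k, T k ∈ D) ∧ Pairwise (Disjoint on T) ∧ ∀ k, Q (T k) ≠ 0 := by
  let S := {A : Set Ω // A ∈ D ∧ (Q '' {C ∈ D | C ⊆ A}).Infinite}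
  choose B hBD hBA hQB hrest using fun A : S => hQ.exists_split hD A.2.1 A.2.2
  let R : ℕ → S := fun n => Nat.rec ⟨Set.univ, hD.1, by simpa using hinf⟩
    (fun _ A => ⟨A.1 \ B A, hD.diff_mem A.2.1 (hBD A), hrest A⟩) n
  have hR : Antitone fun n => (R n).1 := antitone_nat_of_succ_le fun n => Set.sdiff_subset
  refine ⟨fun k => B (R k), fun k => hBD _, (pairwise_disjoint_on _).2 fun k l hkl => ?_,
    fun k => hQB _⟩
  exact Set.disjoint_of_subset_right ((hBA _).trans (hR hkl)) Set.disjoint_sdiff_right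

end IsAdditiveOn

lemma seriesTendsTo_sum_range {f : ℕ → ℝ} {N : ℕ} (hf : ∀ i, N ≤ i → f i = 0) :
    SeriesTendsTo f (∑ i ∈ range N, f i) :=
  (hasSum_sum_of_ne_finset_zero fun i hi => hf i (by simpa using hi)).tendsto_sum_nat

lemma incoherentIn_system3_of_finite {D : Set (Set Ω)} {Q : Set Ω → ℝ} {α : ℕ → ℝ}
    {A : ℕ → Set Ω} (N : ℕ) (hA : ∀ i, A i ∈ D) (hα : ∀ i, N ≤ i → α i = 0) {ε : ℝ}
    (hε : 0 < ε) (hloss : ∀ ω, ∑ i ∈ range N, bterm Q α A ω i ≤ -ε) :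
    IncoherentIn Q (System3 D Q) := by
  have hbterm : ∀ ω i, N ≤ i → bterm Q α A ω i = 0 := fun ω i hi => by simp [bterm, hα i hi]
  exact ⟨α, A, ⟨hA, ⟨_, seriesTendsTo_sum_range (N := N) fun i hi => by simp [hα i hi]⟩,
    fun ω => ⟨_, seriesTendsTo_sum_range (hbterm ω)⟩⟩,
    ε, hε, fun ω => ⟨_, seriesTendsTo_sum_range (hbterm ω), hloss ω⟩⟩

lemma incoherentIn_system3_of_not_additive {D : Set (Set Ω)} {Q : Set Ω → ℝ} {A B : Set Ω}
    (hA : A ∈ D) (hB : B ∈ D) (hAB : A ∪ B ∈ D) (hdisj : Disjoint A B)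
    (hne : Q (A ∪ B) ≠ Q A + Q B) : IncoherentIn Q (System3 D Q) := by
  set d := Q (A ∪ B) - Q A - Q B with hd_def
  -- selling `A` and `B` and buying `A ∪ B`, all at stake `d`, loses `d²` whatever happens
  have hd : d ≠ 0 := fun h => hne (by linarith)
  refine incoherentIn_system3_of_finite 3 (α := fun | 0 => -d | 1 => -d | 2 => d | _ => 0)
    (A := fun | 0 => A | 1 => B | _ => A ∪ B) (ε := d * d) ?_ ?_ (mul_self_pos.2 hd) fun ω => ?_
  · rintro (_ | _ | _) <;> assumption
  · rintro (_ | _ | _ | i) h <;> first | omega | rfl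
  · have hind : ind (A ∪ B) ω = ind A ω + ind B ω := by
      simp only [ind, Set.indicator_union_of_disjoint hdisj]
    simp only [sum_range_succ, sum_range_zero, bterm, hind]
    apply le_of_eq
    rw [hd_def]
    ring

lemma seriesTendsTo_of_tendsto_sum_range_mul {f : ℕ → ℝ} {k : ℕ} (hk : 0 < k) {x : ℝ}
    (hf : Tendsto f atTop (𝓝 0)) (hx : Tendsto (fun M => ∑ i ∈ range (k * M), f i) atTop (𝓝 x)) :
    SeriesTendsTo f x := by
  have hq : Tendsto (· / k) atTop atTop := Nat.tendsto_div_const_atTop hk.ne'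
  have htail : Tendsto (fun n => ∑ r ∈ range (n % k), f (k * (n / k) + r)) atTop (𝓝 0) := by
    refine squeeze_zero_norm (a := fun n => ∑ r ∈ range k, |f (k * (n / k) + r)|) (fun n => ?_) ?_
    · exact (norm_sum_le _ _).trans (sum_le_sum_of_subset_of_nonneg
        (range_subset_range.2 (Nat.mod_lt n hk).le) fun _ _ _ => norm_nonneg _)
    · simpa using tendsto_finsetSum (range k) fun r _ => (hf.comp (tendsto_atTop_mono
        (fun n => (Nat.le_mul_of_pos_left _ hk).trans (Nat.le_add_right _ r)) hq)).abs
  simpa [SeriesTendsTo, ← sum_range_add, Nat.div_add_mod] using (hx.comp hq).add htail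

/-- In the order `+1/(2n+1), +1/(2n+2), -1/(n+1)` (block `n`) every `1/(k+1)` occurs once with each
sign, yet the series converges to `log 2`. -/
def rearrangedIndex (i : ℕ) : ℕ := if i % 3 = 2 then i / 3 else 2 * (i / 3) + i % 3

noncomputable def rearrangedHarmonic (i : ℕ) : ℝ :=
  (if i % 3 = 2 then -1 else 1) / (rearrangedIndex i + 1)

lemma rearrangedIndex_eq_iff {i k : ℕ} :
    rearrangedIndex i = k ↔ i = 3 * (k / 2) + k % 2 ∨ i = 3 * k + 2 := by
  unfold rearrangedIndex; split <;> omega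

lemma sum_range_three_mul_rearrangedHarmonic (M : ℕ) :
    ∑ i ∈ range (3 * M), rearrangedHarmonic i
      = ∑ n ∈ range M, 1 / ((2 * n + 1) * (2 * n + 2) : ℝ) := by
  induction M with
  | zero => simp
  | succ M ih =>
    have h0 : rearrangedHarmonic (3 * M) = 1 / (2 * M + 1) := by
      simp [rearrangedHarmonic, rearrangedIndex, Nat.mul_mod_right]
    have h1 : rearrangedHarmonic (3 * M + 1) = 1 / (2 * M + 2) := by
      simp [rearrangedHarmonic, rearrangedIndex, Nat.mul_add_div]; ring
    have h2 : rearrangedHarmonic (3 * M + 2) = -1 / (M + 1) := by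
      simp [rearrangedHarmonic, rearrangedIndex, Nat.mul_add_div]
    rw [show 3 * (M + 1) = 3 * M + 2 + 1 by ring, sum_range_succ, sum_range_succ, sum_range_succ,
      ih, sum_range_succ, h0, h1, h2]
    field_simp
    ring

lemma tendsto_rearrangedHarmonic : Tendsto rearrangedHarmonic atTop (𝓝 0) := by
  refine squeeze_zero_norm (a := fun i => 1 / ((i / 3 : ℕ) + 1 : ℝ)) (fun i => ?_)
    (tendsto_one_div_add_atTop_nhds_zero_nat.comp (Nat.tendsto_div_const_atTop three_ne_zero))
  have hle : i / 3 ≤ rearrangedIndex i := by unfold rearrangedIndex; split <;> omega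
  have hnorm : ‖rearrangedHarmonic i‖ = 1 / (rearrangedIndex i + 1) := by
    rw [rearrangedHarmonic, norm_div]
    split_ifs <;> simp [abs_of_nonneg (by positivity : (0 : ℝ) ≤ rearrangedIndex i + 1)]
  rw [hnorm]
  gcongr

lemma exists_seriesTendsTo_rearrangedHarmonic :
    ∃ x, 1 / 2 ≤ x ∧ SeriesTendsTo rearrangedHarmonic x := by
  set g : ℕ → ℝ := fun n => 1 / ((2 * n + 1) * (2 * n + 2))
  have hg0 : ∀ n, 0 ≤ g n := fun n => by positivity
  have hg : Summable g := by
    refine ((summable_nat_add_iff 1).2 (Real.summable_one_div_nat_pow.2 one_lt_two)).of_nonneg_of_le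
      hg0 fun n => ?_
    push_cast
    exact one_div_le_one_div_of_le (by positivity) (by nlinarith)
  refine ⟨∑' n, g n, ?_, seriesTendsTo_of_tendsto_sum_range_mul three_pos tendsto_rearrangedHarmonic ?_⟩
  · exact (show (1 / 2 : ℝ) = g 0 by norm_num [g]).trans_le (hg.le_tsum 0 fun n _ => hg0 n)
  · simpa only [sum_range_three_mul_rearrangedHarmonic] using hg.hasSum.tendsto_sum_nat

lemma sum_range_ite_rearrangedIndex {k n : ℕ} (hn : 3 * k + 3 ≤ n) :
    ∑ i ∈ range n, (if rearrangedIndex i = k then rearrangedHarmonic i else 0) = 0 := by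
  have hterm : ∀ i, (if rearrangedIndex i = k then rearrangedHarmonic i else 0)
      = (if i = 3 * (k / 2) + k % 2 then 1 / (k + 1 : ℝ) else 0)
        + (if i = 3 * k + 2 then -1 / (k + 1 : ℝ) else 0) := by
    intro i
    by_cases h : rearrangedIndex i = k
    · rw [if_pos h, rearrangedHarmonic, h]
      rcases rearrangedIndex_eq_iff.1 h with rfl | rfl
      · rw [if_neg (by omega), if_pos rfl, if_neg (by omega), add_zero]
      · rw [if_pos (by omega), if_neg (by omega), if_pos rfl, zero_add]
    · have := rearrangedIndex_eq_iff.not.1 h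
      rw [if_neg h, if_neg (by omega), if_neg (by omega), add_zero]
  rw [sum_congr rfl fun i _ => hterm i, sum_add_distrib, sum_ite_eq', sum_ite_eq',
    if_pos (mem_range.2 (by omega)), if_pos (mem_range.2 (by omega))]
  ring

lemma incoherentIn_system3_of_pairwise_disjoint {D : Set (Set Ω)} {Q : Set Ω → ℝ}
    {T : ℕ → Set Ω} (hTD : ∀ k, T k ∈ D) (hT : Pairwise (Disjoint on T))
    (hQ : ∀ k, Q (T k) ≠ 0) : IncoherentIn Q (System3 D Q) := by
  obtain ⟨x, hx, hfee⟩ := exists_seriesTendsTo_rearrangedHarmonic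
  set α : ℕ → ℝ := fun i => rearrangedHarmonic i / Q (T (rearrangedIndex i))
  set A : ℕ → Set Ω := fun i => T (rearrangedIndex i)
  have hαQ : (fun i => α i * Q (A i)) = rearrangedHarmonic :=
    funext fun i => div_mul_cancel₀ _ (hQ _)
  -- every `ω` lies in at most one `T k`, whose two opposite stakes cancel once both are placed
  have hstakes : ∀ ω, Tendsto (fun n => ∑ i ∈ range n, α i * ind (A i) ω) atTop (𝓝 0) := by
    intro ω
    by_cases hω : ∃ k, ω ∈ T k
    · obtain ⟨k, hk⟩ := hω
      have hmem : ∀ m, ω ∈ T m ↔ m = k := fun m =>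
        ⟨fun hm => by_contra fun hne => Set.disjoint_left.1 (hT hne) hm hk, fun h => h ▸ hk⟩
      have hsum : ∀ n, ∑ i ∈ range n, α i * ind (A i) ω
          = (∑ i ∈ range n, if rearrangedIndex i = k then rearrangedHarmonic i else 0) / Q (T k) := by
        intro n
        rw [sum_div]
        refine sum_congr rfl fun i _ => ?_
        by_cases h : rearrangedIndex i = k <;> simp [α, A, ind, hmem, h]
      refine tendsto_const_nhds.congr' (eventually_atTop.2 ⟨3 * k + 3, fun n hn => ?_⟩)
      dsimp only
      rw [hsum n, sum_range_ite_rearrangedIndex hn, zero_div]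
    · simp [A, ind, not_exists.1 hω]
  have hbal : ∀ ω, SeriesTendsTo (bterm Q α A ω) (-x) := fun ω => by
    refine (zero_sub x ▸ (hstakes ω).sub hfee).congr fun n => ?_
    simp only [bterm, mul_sub, sum_sub_distrib, ← hαQ]
  exact ⟨α, A, ⟨fun i => hTD _, ⟨x, hαQ ▸ hfee⟩, fun ω => ⟨-x, hbal ω⟩⟩,
    1 / 2, by norm_num, fun ω => ⟨-x, hbal ω, by linarith⟩⟩

theorem incoherentIn_system3_of_infinite_image {D : Set (Set Ω)} {Q : Set Ω → ℝ}
    (hD : IsSetField D) (hinf : (Q '' D).Infinite) : IncoherentIn Q (System3 D Q) := by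
  by_cases hQ : IsAdditiveOn D Q
  · obtain ⟨T, hTD, hT, hQT⟩ := hQ.exists_pairwise_disjoint hD hinf
    exact incoherentIn_system3_of_pairwise_disjoint hTD hT hQT
  · simp only [IsAdditiveOn, not_forall] at hQ
    obtain ⟨A, hA, B, hB, hAB, hne⟩ := hQ
    exact incoherentIn_system3_of_not_additive hA hB (hD.2.2 A hA B hB) hAB hne

section CantorSpace

variable {ι : Type*}

def indicatorVec (ω : ι → Bool) : ι → ℝ := fun m => if ω m then 1 else 0

def partialPayoff (α : ℕ → ℝ) (j : ℕ → ι) (n : ℕ) : (ι → ℝ) →ₗ[ℝ] ℝ :=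
  ∑ i ∈ range n, α i • LinearMap.proj (j i)

@[simp]
lemma partialPayoff_apply (α : ℕ → ℝ) (j : ℕ → ι) (n : ℕ) (x : ι → ℝ) :
    partialPayoff α j n x = ∑ i ∈ range n, α i * x (j i) := by
  simp [partialPayoff]

lemma continuous_partialPayoff_indicatorVec (α : ℕ → ℝ) (j : ℕ → ι) (n : ℕ) :
    Continuous fun ω : ι → Bool => partialPayoff α j n (indicatorVec ω) := by
  simp only [partialPayoff_apply, indicatorVec]
  exact continuous_finsetSum _ fun i _ => continuous_const.mul
    ((continuous_of_discreteTopology (f := fun b : Bool => if b then (1 : ℝ) else 0)).comp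
      (continuous_apply _))

lemma partialPayoff_le_of_forall_indicatorVec_le {α : ℕ → ℝ} {j : ℕ → ι} {n : ℕ} {K : ℝ}
    (hK : ∀ ω, partialPayoff α j n (indicatorVec ω) ≤ K) {x : ι → ℝ} (hx0 : ∀ m, 0 ≤ x m)
    (hx1 : ∀ m, x m ≤ 1) : partialPayoff α j n x ≤ K := by
  classical
  set c : ι → ℝ := fun m => ∑ i ∈ range n with j i = m, α i
  have hgroup : ∀ y : ι → ℝ, partialPayoff α j n y = ∑ m ∈ (range n).image j, c m * y m := by
    intro y
    rw [partialPayoff_apply, ← sum_fiberwise_of_maps_to fun i hi => mem_image_of_mem j hi]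
    refine sum_congr rfl fun m _ => ?_
    rw [sum_mul]
    exact sum_congr rfl fun i hi => by rw [(mem_filter.1 hi).2]
  calc partialPayoff α j n x = ∑ m ∈ (range n).image j, c m * x m := hgroup x
    _ ≤ ∑ m ∈ (range n).image j, c m * indicatorVec (fun m => decide (0 < c m)) m :=
        sum_le_sum fun m _ => by
          by_cases h : 0 < c m <;> simp [indicatorVec, h] <;> nlinarith [hx0 m, hx1 m]
    _ = partialPayoff α j n (indicatorVec fun m => decide (0 < c m)) := (hgroup _).symm
    _ ≤ K := hK _

lemma exists_isOpen_forall_abs_le {X κ : Type*} [TopologicalSpace X] [BaireSpace X] [Nonempty X]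
    {f : κ → X → ℝ} (hf : ∀ n, Continuous (f n)) (hb : ∀ x, ∃ M, ∀ n, |f n x| ≤ M) :
    ∃ U : Set X, IsOpen U ∧ U.Nonempty ∧ ∃ M, ∀ x ∈ U, ∀ n, |f n x| ≤ M := by
  have hclosed : ∀ M : ℕ, IsClosed {x | ∀ n, |f n x| ≤ M} := fun M => by
    simp only [Set.ofPred_forall]
    exact isClosed_iInter fun n => isClosed_le (hf n).abs continuous_const
  have hcover : ⋃ M : ℕ, {x | ∀ n, |f n x| ≤ M} = Set.univ := Set.eq_univ_of_forall fun x => by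
    obtain ⟨M, hM⟩ := hb x
    obtain ⟨N, hN⟩ := exists_nat_ge M
    exact Set.mem_iUnion.2 ⟨N, fun n => (hM n).trans hN⟩
  obtain ⟨M, hM⟩ := nonempty_interior_of_iUnion_of_closed hclosed hcover
  exact ⟨_, isOpen_interior, hM, M, fun x hx => interior_subset hx⟩

lemma exists_forall_abs_partialPayoff_le {α : ℕ → ℝ} {j : ℕ → ι}
    (h : ∀ ω : ι → Bool, ∃ M, ∀ n, |partialPayoff α j n (indicatorVec ω)| ≤ M) :
    ∃ K, ∀ ω n, |partialPayoff α j n (indicatorVec ω)| ≤ K := by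
  classical
  obtain ⟨U, hU, ⟨ω₀, hω₀⟩, M₀, hM₀⟩ :=
    exists_isOpen_forall_abs_le (continuous_partialPayoff_indicatorVec α j) h
  obtain ⟨I, u, hu, hIU⟩ := isOpen_pi_iff.1 hU ω₀ hω₀
  choose B hB using fun m => h fun k => decide (k = m)
  refine ⟨M₀ + ∑ m ∈ I, B m, fun ω n => ?_⟩
  -- `ω` differs on the finite set `I` from a point of the cylinder `U`
  set ω' := I.piecewise ω₀ ω
  have hω' : ω' ∈ U := hIU fun m hm => by
    simpa only [ω', Finset.piecewise_eq_of_mem _ _ _ hm] using (hu m hm).2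
  have hdecomp : indicatorVec ω = indicatorVec ω'
      + ∑ m ∈ I, (indicatorVec ω m - indicatorVec ω₀ m) • indicatorVec fun k => decide (k = m) := by
    funext k
    by_cases hk : k ∈ I <;> simp [indicatorVec, ω', hk, Finset.sum_apply]
  have hterm : ∀ m ∈ I, |(indicatorVec ω m - indicatorVec ω₀ m)
      * partialPayoff α j n (indicatorVec fun k => decide (k = m))| ≤ B m := fun m _ => by
    have hdiff : |indicatorVec ω m - indicatorVec ω₀ m| ≤ 1 := by
      simp only [indicatorVec]; split_ifs <;> norm_num
    rw [abs_mul]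
    exact (mul_le_of_le_one_left (abs_nonneg _) hdiff).trans (hB m n)
  calc |partialPayoff α j n (indicatorVec ω)|
      = |partialPayoff α j n (indicatorVec ω') + ∑ m ∈ I, (indicatorVec ω m - indicatorVec ω₀ m)
          * partialPayoff α j n (indicatorVec fun k => decide (k = m))| := by
        rw [congrArg (partialPayoff α j n) hdecomp, map_add, map_sum]
        simp only [map_smul, smul_eq_mul]
    _ ≤ M₀ + ∑ m ∈ I, B m := (abs_add_le _ _).trans
        (add_le_add (hM₀ _ hω' n) ((abs_sum_le_sum_abs _ _).trans (sum_le_sum hterm)))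

/-- The points `t < ⌊N p⌋₊`, `t < N`, have coordinate frequencies `⌊N p⌋₊ / N`, within `1/N` below
`p`. -/
lemma natCast_mul_partialPayoff_le {α : ℕ → ℝ} {j : ℕ → ι} {n : ℕ} {K : ℝ}
    (hK : ∀ ω, partialPayoff α j n (indicatorVec ω) ≤ K) {p : ι → ℝ} (hp0 : ∀ m, 0 ≤ p m)
    (hp1 : ∀ m, p m ≤ 1) (N : ℕ) :
    N * partialPayoff α j n p
      ≤ ∑ t ∈ range N, partialPayoff α j n (indicatorVec fun m => decide (t < ⌊N * p m⌋₊)) + K := by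
  have hcount : ∑ t ∈ range N, indicatorVec (fun m => decide (t < ⌊N * p m⌋₊))
      = fun m => (⌊N * p m⌋₊ : ℝ) := by
    funext m
    have hle : ⌊N * p m⌋₊ ≤ N := Nat.floor_le_of_le (by nlinarith [hp1 m])
    rw [Finset.sum_apply]
    simp only [indicatorVec, decide_eq_true_eq]
    rw [sum_boole, show (range N).filter (· < ⌊N * p m⌋₊) = range ⌊N * p m⌋₊ by
      ext t; simp only [mem_filter, mem_range]; omega, card_range]
  have hsplit : (N : ℝ) • p = (fun m => (⌊N * p m⌋₊ : ℝ)) + fun m => N * p m - ⌊N * p m⌋₊ := by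
    funext m; simp
  calc N * partialPayoff α j n p = partialPayoff α j n ((N : ℝ) • p) := by rw [map_smul, smul_eq_mul]
    _ = ∑ t ∈ range N, partialPayoff α j n (indicatorVec fun m => decide (t < ⌊N * p m⌋₊))
          + partialPayoff α j n fun m => N * p m - ⌊N * p m⌋₊ := by
        rw [hsplit, map_add, ← hcount, map_sum]
    _ ≤ _ := by
        gcongr
        exact partialPayoff_le_of_forall_indicatorVec_le hK
          (fun m => sub_nonneg.2 (Nat.floor_le (by nlinarith [hp0 m])))
          fun m => by linarith [Nat.lt_floor_add_one ((N : ℝ) * p m)]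

theorem coherentIn_system3_of_coordinate_events {C : Set (Set (ι → Bool))}
    {P : Set (ι → Bool) → ℝ} (hC : ∀ S ∈ C, ∃ m, S = {ω | ω m = true})
    (hP : ∀ S ∈ C, 0 ≤ P S ∧ P S ≤ 1) : CoherentIn P (System3 C P) := by
  classical
  rintro ⟨α, A, ⟨hAC, ⟨s, hs⟩, -⟩, ε, hε, hloss⟩
  choose j hj using fun i => hC _ (hAC i)
  set p : ι → ℝ := fun m => if {ω | ω m = true} ∈ C then P {ω | ω m = true} else 0
  have hpA : ∀ i, P (A i) = p (j i) := fun i => by simp [p, ← hj i, hAC i]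
  have hp : ∀ m, 0 ≤ p m ∧ p m ≤ 1 := fun m => by
    by_cases h : {ω | ω m = true} ∈ C
    · simpa [p, h] using hP _ h
    · simp [p, h]
  set L := partialPayoff α j
  have hfee : Tendsto (fun n => L n p) atTop (𝓝 s) := by simpa [L, hpA, SeriesTendsTo] using hs
  have hV : ∀ ω, ∃ V, Tendsto (fun n => L n (indicatorVec ω)) atTop (𝓝 V) ∧ V ≤ s - ε := by
    intro ω
    obtain ⟨V, hV, hVε⟩ := hloss ω
    refine ⟨V + s, (hV.add hfee).congr fun n => ?_, by linarith⟩
    simp only [bterm, hpA]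
    simp [L, hj, ind, indicatorVec, mul_sub, Set.indicator_apply]
  choose V hVlim hVle using hV
  obtain ⟨K, hK⟩ := exists_forall_abs_partialPayoff_le fun ω =>
    let ⟨M, hM⟩ := (hVlim ω).abs.bddAbove_range
    ⟨M, fun n => hM ⟨n, rfl⟩⟩
  have hN : ∀ N : ℕ, (N : ℝ) * ε ≤ K := by
    intro N
    have hlim := le_of_tendsto_of_tendsto' (hfee.const_mul (N : ℝ))
      ((tendsto_finsetSum (range N) fun t _ => hVlim _).add_const K) fun n =>
        natCast_mul_partialPayoff_le (fun ω => (le_abs_self _).trans (hK ω n))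
          (fun m => (hp m).1) (fun m => (hp m).2) N
    have hsum := sum_le_sum fun t (_ : t ∈ range N) => hVle fun m => decide (t < ⌊N * p m⌋₊)
    rw [sum_const, card_range, nsmul_eq_mul] at hsum
    linarith
  obtain ⟨N, hN'⟩ := exists_nat_gt (K / ε)
  linarith [hN N, (div_lt_iff₀ hε).1 hN']

end CantorSpace

theorem stmt12 (P : Set (ℕ → Bool) → ℝ)
    (hP : ∀ i, 1 ≤ i → P (AB i) = 1/2 - (1/4 : ℝ) ^ i) :
    CoherentIn P (System3 {S | ∃ i, 1 ≤ i ∧ S = AB i} P) ∧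
    ∀ D : Set (Set (ℕ → Bool)), IsSetField D → (∀ i, 1 ≤ i → AB i ∈ D) →
      ∀ Q : Set (ℕ → Bool) → ℝ, (∀ i, 1 ≤ i → Q (AB i) = P (AB i)) →
        ¬ CoherentIn Q (System3 D Q) := by
  refine ⟨coherentIn_system3_of_coordinate_events (by rintro _ ⟨i, -, rfl⟩; exact ⟨i, rfl⟩) ?_,
    fun D hD hAD Q hQ hcoh => hcoh (incoherentIn_system3_of_infinite_image hD ?_)⟩
  · rintro _ ⟨i, hi, rfl⟩
    have : (1 / 4 : ℝ) ^ i ≤ 1 / 4 := pow_le_of_le_one (by norm_num) (by norm_num) (by omega)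
    rw [hP i hi]
    constructor <;> linarith [pow_pos (by norm_num : (0 : ℝ) < 1 / 4) i]
  · have hinj : Injective fun i => Q (AB (i + 1)) := fun i i' (h : Q _ = Q _) => by
      rw [hQ _ (by omega), hQ _ (by omega), hP _ (by omega), hP _ (by omega)] at h
      exact Nat.succ_injective
        (pow_right_injective₀ (by norm_num : (0 : ℝ) < 1 / 4) (by norm_num) (sub_right_injective h))
    exact Set.infinite_of_injective_forall_mem hinj fun i => ⟨_, hAD (i + 1) (by omega), rfl⟩
end
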